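/- arXiv:0905.3191 — 4 statements merged into one kernel-verified Lean document; each statement's English description precedes it below -/
import Mathlib

section
/- Let v be a nonnegative valuation with v(∅)=0 on a finite set S of items, let H' ≥ max_{S'⊆S} v(S'), let γ > 1, and set p[t] = H'/γ^t. For each t let Φ(p[t]) be a utility-maximizing subset at uniform price p[t]. Then for any k ≥ 0, the sum over t = 1 to k of p[t]·|Φ(p[t])| is at least (1/(γ-1))·(max_{S'⊆S} v(S') - |S|·H'/γ^k). -/
/-- Geometric price-sweep revenue bound: with prices `p t = H' / γ^t`, `γ > 1`,
`H'` at least the maximum valuation, and `Φ t` a utility-maximizing set at price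
`p t`, we have `∑_{t=1}^k p t * |Φ t| ≥ (1/(γ-1)) * (max_{S'} v S' - n * H'/γ^k)`. -/
theorem stmt_3 {α : Type*} [Fintype α] [DecidableEq α] (v : Finset α → ℝ)
    (hsub : ∀ S T : Finset α, v (S ∪ T) ≤ v S + v T)
    (hv0 : v ∅ = 0) (hnn : ∀ S : Finset α, 0 ≤ v S)
    (H' γ : ℝ) (hγ : 1 < γ)
    (hH' : ∀ S' : Finset α, v S' ≤ H')
    (Φ : ℕ → Finset α)
    (hΦ : ∀ t : ℕ, ∀ T : Finset α,
      v T - (H' / γ ^ t) * T.card ≤ v (Φ t) - (H' / γ ^ t) * (Φ t).card)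
    (k : ℕ) :
    (1 / (γ - 1)) *
        ((Finset.univ : Finset α).powerset.sup' (by simp) v
          - (Fintype.card α : ℝ) * H' / γ ^ k)
      ≤ ∑ t ∈ Finset.Icc 1 k, (H' / γ ^ t) * ((Φ t).card : ℝ) := by
  have hγ0 : (0:ℝ) < γ := lt_trans one_pos hγ
  have hγ1 : (0:ℝ) < γ - 1 := sub_pos.mpr hγ
  have hH0 : (0:ℝ) ≤ H' := le_trans (hnn ∅) (hH' ∅)
  set u : ℕ → ℝ := fun t => v (Φ t) - (H' / γ ^ t) * (Φ t).card with hu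
  have hstep : ∀ t : ℕ, u (t+1) - u t ≤ (γ - 1) * ((H' / γ ^ (t+1)) * ((Φ (t+1)).card : ℝ)) := by
    intro t
    have h1 := hΦ t (Φ (t+1))
    have hpow : H' / γ ^ t = γ * (H' / γ ^ (t+1)) := by
      rw [pow_succ]
      field_simp
    simp only [hu]
    rw [hpow] at h1 ⊢
    nlinarith [h1]
  have htel : ∑ t ∈ Finset.range k, (u (t+1) - u t) = u k - u 0 :=
    Finset.sum_range_sub u k
  have hsum : ∑ t ∈ Finset.range k, (u (t+1) - u t)
      ≤ (γ - 1) * ∑ t ∈ Finset.Icc 1 k, (H' / γ ^ t) * ((Φ t).card : ℝ) := by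
    rw [Finset.mul_sum]
    have : ∑ t ∈ Finset.Icc 1 k, (γ - 1) * ((H' / γ ^ t) * ((Φ t).card : ℝ))
        = ∑ t ∈ Finset.range k, (γ - 1) * ((H' / γ ^ (t+1)) * ((Φ (t+1)).card : ℝ)) := by
      rw [← Finset.Ico_add_one_right_eq_Icc, Finset.sum_Ico_eq_sum_range]
      simp [add_comm]
    rw [this]
    exact Finset.sum_le_sum fun t _ => hstep t
  have hu0 : u 0 ≤ 0 := by
    simp only [hu, pow_zero, div_one]
    rcases Finset.eq_empty_or_nonempty (Φ 0) with h | h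
    · simp [h, hv0]
    · have hc : (1:ℝ) ≤ ((Φ 0).card : ℝ) := by exact_mod_cast Finset.card_pos.mpr h
      nlinarith [hH' (Φ 0)]
  -- lower bound on u k
  obtain ⟨T, hTmem, hT⟩ := Finset.exists_mem_eq_sup'
    (by simp : ((Finset.univ : Finset α).powerset).Nonempty) v
  have hpk : 0 ≤ H' / γ ^ k := div_nonneg hH0 (le_of_lt (pow_pos hγ0 k))
  have hcardT : (T.card : ℝ) ≤ (Fintype.card α : ℝ) := by
    exact_mod_cast Finset.card_le_card (Finset.mem_powerset.mp hTmem) |>.trans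
      (le_of_eq (Finset.card_univ))
  have huk : v T - (Fintype.card α : ℝ) * H' / γ ^ k ≤ u k := by
    have h2 := hΦ k T
    have h3 : (H' / γ ^ k) * (T.card : ℝ) ≤ (H' / γ ^ k) * (Fintype.card α : ℝ) :=
      mul_le_mul_of_nonneg_left hcardT hpk
    have h4 : (Fintype.card α : ℝ) * H' / γ ^ k = (H' / γ ^ k) * (Fintype.card α : ℝ) := by
      ring
    rw [h4]
    simp only [hu] at h2 ⊢
    linarith
  rw [hT, div_mul_eq_mul_div, div_le_iff₀ hγ1, one_mul]
  have := hsum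
  rw [htel, mul_comm] at this
  clear_value u
  linarith [this, hu0, huk]
end

section
/- Suppose a buyer with subadditive valuation v sees a set I' of unsold items containing a subset L with v(L) ≥ p_j·|L|, where p_j = OPT/2^j and v(T) ≤ OPT for all T. If the seller posts a uniform price chosen uniformly at random from {p_1, ..., p_{j+1}} (p_t = OPT/2^t), then the expected revenue from this buyer, i.e., (1/(j+1))·Σ_{t=1}^{j+1} p_t·|Φ(p_t)|, is at least p_j·|L| / (2(j+1)). -/
/-- Dynamic pricing key lemma: if the unsold items contain a set `L` with
`v L ≥ p_j * |L|` where `p_t = OPT / 2^t` and `v ≤ OPT`, then the expected revenue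
of a uniformly random price from `{p_1, …, p_{j+1}}` is at least
`p_j * |L| / (2 (j+1))`. -/
theorem stmt_4 {α : Type*} [Fintype α] [DecidableEq α] (v : Finset α → ℝ)
    (hsub : ∀ S T : Finset α, v (S ∪ T) ≤ v S + v T)
    (hv0 : v ∅ = 0) (hnn : ∀ S : Finset α, 0 ≤ v S)
    (OPT : ℝ) (hOPT : 0 < OPT) (hub : ∀ T : Finset α, v T ≤ OPT)
    (j : ℕ) (L : Finset α) (hL : OPT / 2 ^ j * L.card ≤ v L)
    (Φ : ℕ → Finset α)
    (hΦ : ∀ t : ℕ, ∀ T : Finset α,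
      v T - (OPT / 2 ^ t) * T.card ≤ v (Φ t) - (OPT / 2 ^ t) * (Φ t).card) :
    (OPT / 2 ^ j) * (L.card : ℝ) / (2 * ((j : ℝ) + 1))
      ≤ (1 / ((j : ℝ) + 1)) *
          ∑ t ∈ Finset.Icc 1 (j + 1), (OPT / 2 ^ t) * ((Φ t).card : ℝ) := by
  set p : ℕ → ℝ := fun t => OPT / 2 ^ t with hp
  set f : ℕ → ℝ := fun t => v (Φ t) - p t * (Φ t).card with hf
  -- step inequality
  have hstep : ∀ n : ℕ, f (n + 1) ≤ f n + p (n + 1) * (Φ (n + 1)).card := by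
    intro n
    have h := hΦ n (Φ (n + 1))
    have hpn : p n = 2 * p (n + 1) := by
      simp only [hp, pow_succ, ← div_div]
      ring
    simp only [hf, hp] at *
    nlinarith [h]
  -- telescoping
  have htel : ∀ n : ℕ, f n - f 0 ≤ ∑ t ∈ Finset.Icc 1 n, p t * (Φ t).card := by
    intro n
    induction n with
    | zero => simp
    | succ m ih =>
      rw [Finset.sum_Icc_succ_top (by omega)]
      have := hstep m
      linarith
  -- f 0 ≤ 0
  have hf0 : f 0 ≤ 0 := by
    simp only [hf, hp, pow_zero, div_one]
    rcases Finset.eq_empty_or_nonempty (Φ 0) with h | h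
    · simp [h, hv0]
    · have hc : (1 : ℝ) ≤ (Φ 0).card := by
        exact_mod_cast Finset.card_pos.mpr h
      nlinarith [hub (Φ 0)]
  -- f (j+1) ≥ p j * |L| / 2
  have hfj : p j * (L.card : ℝ) / 2 ≤ f (j + 1) := by
    have h := hΦ (j + 1) L
    have hpj : p (j + 1) = p j / 2 := by
      simp only [hp, pow_succ, ← div_div]
    simp only [hf] at *
    have hL' : p j * (L.card : ℝ) ≤ v L := hL
    nlinarith
  have hsum : p j * (L.card : ℝ) / 2 ≤ ∑ t ∈ Finset.Icc 1 (j + 1), p t * (Φ t).card := by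
    have h2 := htel (j + 1)
    clear_value p f
    linarith
  have hjpos : (0 : ℝ) < (j : ℝ) + 1 := by positivity
  calc OPT / 2 ^ j * (L.card : ℝ) / (2 * ((j : ℝ) + 1))
      = (p j * (L.card : ℝ) / 2) * (1 / ((j : ℝ) + 1)) := by
        simp only [hp]
        rw [div_mul_eq_div_div_swap, mul_one_div, div_right_comm]
    _ ≤ (∑ t ∈ Finset.Icc 1 (j + 1), p t * (Φ t).card) * (1 / ((j : ℝ) + 1)) := by
        apply mul_le_mul_of_nonneg_right hsum
        positivity
    _ = (1 / ((j : ℝ) + 1)) * ∑ t ∈ Finset.Icc 1 (j + 1), (OPT / 2 ^ t) * ((Φ t).card : ℝ) := by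
        simp only [hp]; ring
end

section
/- Let u(p) be the maximum utility function of a valuation v on n items (so u is convex, piecewise linear, non-increasing, with |slope| ≤ n) and suppose u(q) = 0 for some q ≤ OPT. For prices p_t = OPT/2^t, the maximum utility at p_{j+1} is bounded by u(p_{j+1}) ≤ Σ_{t=1}^{j+1} |Φ(p_t)|·p_t, where |Φ(p_t)| is the number of items in a utility-maximizing set at price p_t. -/
/-- Riemann-sum bound on the maximum-utility function: `u` is non-increasing on
`[0,∞)`, its decrease over `[a,b]` is bounded by `Φ a * (b - a)` (slope bound from
convexity), and `u q = 0` for some `q ≤ OPT`. Then for prices `p_t = OPT / 2^t`,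
`u (p_{j+1}) ≤ ∑_{t=1}^{j+1} Φ(p_t) * p_t`. -/
theorem stmt_6 (u : ℝ → ℝ) (Φ : ℝ → ℕ) (OPT : ℝ) (hOPT : 0 < OPT)
    (hanti : AntitoneOn u (Set.Ici (0:ℝ)))
    (hslope : ∀ a b : ℝ, 0 ≤ a → a ≤ b → u a - u b ≤ (Φ a : ℝ) * (b - a))
    (q : ℝ) (hq0 : 0 ≤ q) (hq : q ≤ OPT) (huq : u q = 0)
    (j : ℕ) :
    u (OPT / 2 ^ (j + 1))
      ≤ ∑ t ∈ Finset.Icc 1 (j + 1), (Φ (OPT / 2 ^ t) : ℝ) * (OPT / 2 ^ t) := by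
  have key : ∀ m : ℕ, u (OPT / 2 ^ m)
      ≤ ∑ t ∈ Finset.Icc 1 m, (Φ (OPT / 2 ^ t) : ℝ) * (OPT / 2 ^ t) := by
    intro m
    induction m with
    | zero =>
      simp only [pow_zero, div_one, Finset.Icc_self, Nat.lt_irrefl]
      rw [show Finset.Icc 1 0 = ∅ from rfl]
      simp only [Finset.sum_empty]
      calc u OPT ≤ u q := hanti (Set.mem_Ici.mpr hq0) (Set.mem_Ici.mpr (hq0.trans hq)) hq
        _ = 0 := huq
    | succ m ih =>
      have hpos : (0:ℝ) < OPT / 2 ^ (m + 1) := by positivity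
      have hle : OPT / 2 ^ (m + 1) ≤ OPT / 2 ^ m := by
        apply div_le_div_of_nonneg_left hOPT.le (by positivity)
        exact pow_le_pow_right₀ (by norm_num) (Nat.le_succ m)
      have hs := hslope (OPT / 2 ^ (m + 1)) (OPT / 2 ^ m) hpos.le hle
      have hdiff : OPT / 2 ^ m - OPT / 2 ^ (m + 1) = OPT / 2 ^ (m + 1) := by
        field_simp
        ring
      rw [hdiff] at hs
      rw [Finset.sum_Icc_succ_top (Nat.one_le_iff_ne_zero.mpr (Nat.succ_ne_zero m))]
      linarith
  exact key (j + 1)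
end

section
/- Let v(S) = Σ_{i=1}^{|S|} 1/i for every subset S of an n-element item set. Then v is subadditive, the maximum social welfare from a single buyer is H_n = Θ(log n), but for any assignment of nonnegative prices to the items, the revenue obtained (the total price of a utility-maximizing set) is at most 1. -/
/-- The harmonic valuation `v S = ∑_{i=1}^{|S|} 1/i` on `n` items is subadditive,
has maximum social welfare `H_n = Θ(log n)`, yet for any nonnegative item prices the
revenue from a utility-maximizing buyer is at most `1`. -/
theorem stmt_16 {α : Type*} [Fintype α] [DecidableEq α]
    (n : ℕ) (hn : Fintype.card α = n) (hn1 : 1 ≤ n) :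
    let v : Finset α → ℝ := fun S => ∑ i ∈ Finset.range S.card, 1 / ((i : ℝ) + 1)
    (∀ S T : Finset α, v (S ∪ T) ≤ v S + v T) ∧
    (Real.log n ≤ v Finset.univ ∧ v Finset.univ ≤ Real.log n + 1) ∧
    (∀ price : α → ℝ, (∀ g, 0 ≤ price g) →
      ∀ S : Finset α,
        (∀ T : Finset α, v T - ∑ g ∈ T, price g ≤ v S - ∑ g ∈ S, price g) →
        ∑ g ∈ S, price g ≤ 1) := by
  intro v
  set H : ℕ → ℝ := fun m => ∑ i ∈ Finset.range m, 1 / ((i : ℝ) + 1) with hHdef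
  have hv : ∀ S : Finset α, v S = H S.card := fun _ => rfl
  have hmono : ∀ a b : ℕ, a ≤ b → H a ≤ H b := by
    intro a b hab
    apply Finset.sum_le_sum_of_subset_of_nonneg (Finset.range_subset_range.mpr hab)
    intro i _ _
    positivity
  have hadd : ∀ a b : ℕ, H (a + b) ≤ H a + H b := by
    intro a b
    have heq : H (a + b) = H a + ∑ i ∈ Finset.range b, 1 / (((a : ℝ) + i) + 1) := by
      simp only [hHdef]
      rw [Finset.sum_range_add]
      congr 1
      refine Finset.sum_congr rfl fun i _ => ?_
      push_cast
      ring
    rw [heq]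
    refine add_le_add_right (Finset.sum_le_sum fun i _ => ?_) (H a)
    refine one_div_le_one_div_of_le (by positivity) ?_
    linarith [Nat.cast_nonneg (α := ℝ) a]
  have hharm : ∀ m : ℕ, H m = (harmonic m : ℝ) := by
    intro m
    simp only [hHdef, harmonic, one_div]
    push_cast
    rfl
  refine ⟨?_, ?_, ?_⟩
  · intro S T
    calc v (S ∪ T) = H (S ∪ T).card := hv _
      _ ≤ H (S.card + T.card) := hmono _ _ (Finset.card_union_le S T)
      _ ≤ H S.card + H T.card := hadd _ _
      _ = v S + v T := rfl
  · rw [hv, hharm, Finset.card_univ, hn]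
    constructor
    · calc Real.log n ≤ Real.log (n + 1) := by
            apply Real.log_le_log (by positivity)
            linarith
        _ ≤ (harmonic n : ℝ) := by exact_mod_cast log_add_one_le_harmonic n
    · have := harmonic_le_one_add_log n
      linarith
  · intro price hpos S hopt
    rcases S.eq_empty_or_nonempty with rfl | hS
    · simp
    obtain ⟨g, hg, hmax⟩ := S.exists_max_image price hS
    have hcard : 1 ≤ S.card := Finset.card_pos.mpr hS
    have hcardT : (S.erase g).card = S.card - 1 := Finset.card_erase_of_mem hg
    have hsum : ∑ g' ∈ S.erase g, price g' + price g = ∑ g' ∈ S, price g' :=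
      Finset.sum_erase_add S price hg
    have hvdiff : v S = v (S.erase g) + 1 / (S.card : ℝ) := by
      obtain ⟨m, hm⟩ : ∃ m, S.card = m + 1 := ⟨S.card - 1, (Nat.succ_pred_eq_of_pos hcard).symm⟩
      rw [hv, hv, hcardT, hm]
      simp only [hHdef, Nat.add_sub_cancel, Finset.sum_range_succ]
      push_cast
      ring
    have hkey : price g ≤ 1 / (S.card : ℝ) := by
      have := hopt (S.erase g)
      have h2 : price g = ∑ g' ∈ S, price g' - ∑ g' ∈ S.erase g, price g' := by
        linarith
      rw [h2]
      linarith [hvdiff]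
    calc ∑ g' ∈ S, price g' ≤ ∑ _g' ∈ S, price g := Finset.sum_le_sum hmax
      _ = S.card * price g := by rw [Finset.sum_const, nsmul_eq_mul]
      _ ≤ S.card * (1 / (S.card : ℝ)) := by
          apply mul_le_mul_of_nonneg_left hkey (by positivity)
      _ = 1 := by
          field_simp
end
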